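/- Let A = P₁ − R₁ + S₁ = P₂ − R₂ + S₂ be two convergent double weak splittings of type II of a symmetric nonsingular matrix A ∈ ℝ^{n×n}, with iteration matrices W̃₁ and W̃₂ respectively. If P₂P₁⁻¹ ≥ I and S₁P₁⁻¹ ≥ S₂P₁⁻¹, then ρ(W̃₁) ≤ ρ(W̃₂) < 1. -/

import Mathlib

open Matrix Filter Topology

/-- The spectral radius of a real square matrix: the maximum (supremum) of the
moduli of its complex eigenvalues. -/
noncomputable def specRad {n : Type*} [Fintype n] [DecidableEq n]
    (B : Matrix n n ℝ) : ℝ :=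
  sSup ((fun z : ℂ => ‖z‖) '' spectrum ℂ (B.map Complex.ofReal))

/-- Entrywise order on real matrices: `entryLE A B` means every entry of `A` is
at most the corresponding entry of `B`. -/
def entryLE {m n : Type*} (A B : Matrix m n ℝ) : Prop :=
  ∀ i j, A i j ≤ B i j

/-- `X` is the Moore–Penrose inverse of `A`. -/
def IsMoorePenrose {m n : Type*} [Fintype m] [Fintype n]
    (A : Matrix m n ℝ) (X : Matrix n m ℝ) : Prop :=
  A * X * A = A ∧ X * A * X = X ∧ (A * X)ᵀ = A * X ∧ (X * A)ᵀ = X * A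

/-- Iteration matrix of a double weak splitting of type II:
`W̃ = [[(RP⁻¹)ᵀ, −(SP⁻¹)ᵀ],[I, 0]]`. -/
noncomputable def itMatII {n : Type*} [Fintype n] [DecidableEq n]
    (P R S : Matrix n n ℝ) : Matrix (n ⊕ n) (n ⊕ n) ℝ :=
  Matrix.fromBlocks ((R * P⁻¹)ᵀ) (-((S * P⁻¹)ᵀ)) 1 0

/-- Iteration matrix of a double weak splitting of type I:
`Ŵ = [[P⁻¹R, −P⁻¹S],[I, 0]]`. -/
noncomputable def itMatI {n : Type*} [Fintype n] [DecidableEq n]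
    (P R S : Matrix n n ℝ) : Matrix (n ⊕ n) (n ⊕ n) ℝ :=
  Matrix.fromBlocks (P⁻¹ * R) (-(P⁻¹ * S)) 1 0

/-!
Transposing the iteration matrix does not change its spectral radius, and the transpose
`T = [[RP⁻¹, I], [-SP⁻¹, 0]]` is entrywise nonnegative. For such `T` the spectral radius `λ` is
witnessed by a vector `x ≥ 0, x ≠ 0` with `λx ≤ Tx` (the moduli of an eigenvector for an
eigenvalue of modulus `λ`), and conversely any such vector bounds the spectral radius from
below, by Gelfand's formula applied to `λᵏx ≤ Tᵏx`.

For the block matrix `T` and `λ > 0` these test vectors amount to `u ≥ 0, u ≠ 0` with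
`λ²u ≤ λRP⁻¹u - SP⁻¹u`. Writing `u = Pz` and `R = P + S - A`, this reads
`λ(1-λ)Pz - (1-λ)Sz - λAz ≥ 0`, which for `0 < λ < 1` only improves when `Pz` grows and `Sz`
shrinks. Hence `P₂P₁⁻¹u` is a test vector for the second splitting at the value `λ = ρ(W̃₁)`.
-/

section NonnegMatrix

variable {l m α : Type*} [Fintype m] [CommSemiring α] [PartialOrder α] [IsOrderedRing α]

lemma mulVec_mono_of_nonneg {B : Matrix l m α} (hB : ∀ i j, 0 ≤ B i j) {u v : m → α}
    (huv : u ≤ v) : B *ᵥ u ≤ B *ᵥ v := fun i =>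
  Finset.sum_le_sum fun j _ => mul_le_mul_of_nonneg_left (huv j) (hB i j)

lemma mulVec_le_mulVec_of_le {B C : Matrix l m α} (hBC : ∀ i j, B i j ≤ C i j) {u : m → α}
    (hu : 0 ≤ u) : B *ᵥ u ≤ C *ᵥ u := fun i =>
  Finset.sum_le_sum fun j _ => mul_le_mul_of_nonneg_right (hBC i j) (hu j)

lemma pow_smul_le_pow_mulVec [DecidableEq m] {B : Matrix m m α} (hB : ∀ i j, 0 ≤ B i j)
    {r : α} (hr : 0 ≤ r) {x : m → α} (h : r • x ≤ B *ᵥ x) (k : ℕ) :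
    r ^ k • x ≤ (B ^ k) *ᵥ x := by
  induction k with
  | zero => simp
  | succ k ih =>
    calc r ^ (k + 1) • x = r ^ k • (r • x) := by rw [pow_succ, mul_smul]
      _ ≤ r ^ k • (B *ᵥ x) := smul_le_smul_of_nonneg_left h (pow_nonneg hr k)
      _ = B *ᵥ (r ^ k • x) := (mulVec_smul B _ x).symm
      _ ≤ B *ᵥ (B ^ k *ᵥ x) := mulVec_mono_of_nonneg hB ih
      _ = B ^ (k + 1) *ᵥ x := by rw [mulVec_mulVec, pow_succ']

end NonnegMatrix

lemma tendsto_mul_pow_rpow_one_div {c r : ℝ} (hc : 0 < c) (hr : 0 ≤ r) :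
    Tendsto (fun k : ℕ => (c * r ^ k) ^ (1 / k : ℝ)) atTop (𝓝 r) := by
  have hroot : Tendsto (fun k : ℕ => c ^ (1 / k : ℝ)) atTop (𝓝 1) := by
    simpa [Function.comp_def] using ((Real.continuousAt_const_rpow hc.ne').tendsto.comp
      tendsto_one_div_atTop_nhds_zero_nat)
  refine (one_mul r ▸ hroot.mul_const r).congr' ?_
  filter_upwards [eventually_ne_atTop 0] with k hk
  rw [Real.mul_rpow hc.le (pow_nonneg hr k), one_div, Real.pow_rpow_inv_natCast hr hk]

lemma ofReal_le_spectralRadius_of_mul_pow_le_norm {A : Type*} [NormedRing A]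
    [NormedAlgebra ℂ A] [CompleteSpace A] (a : A) {c r : ℝ} (hc : 0 < c) (hr : 0 ≤ r)
    (h : ∀ k : ℕ, c * r ^ k ≤ ‖a ^ k‖) : ENNReal.ofReal r ≤ spectralRadius ℂ a :=
  le_of_tendsto_of_tendsto ((ENNReal.continuous_ofReal.tendsto r).comp
      (tendsto_mul_pow_rpow_one_div hc hr))
    (spectrum.pow_norm_pow_one_div_tendsto_nhds_spectralRadius a)
    (Eventually.of_forall fun k => ENNReal.ofReal_le_ofReal <|
      Real.rpow_le_rpow (by positivity) (h k) (by positivity))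

section SpecRad

attribute [local instance] Matrix.linftyOpNormedAddCommGroup Matrix.linftyOpNormedRing
  Matrix.linftyOpNormedAlgebra

variable {m : Type*} [Fintype m] [DecidableEq m]

lemma specRad_nonneg (B : Matrix m m ℝ) : 0 ≤ specRad B :=
  Real.sSup_nonneg (by rintro _ ⟨μ, _, rfl⟩; exact norm_nonneg μ)

lemma spectrum_transpose {R : Type*} [CommRing R] (B : Matrix m m R) :
    spectrum R Bᵀ = spectrum R B := by
  ext
  simp only [mem_spectrum_iff_not_isUnit_eval_charpoly, charpoly_transpose]

lemma specRad_transpose (B : Matrix m m ℝ) : specRad Bᵀ = specRad B := by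
  rw [specRad, specRad, transpose_map, spectrum_transpose]

lemma nonempty_of_specRad_pos {B : Matrix m m ℝ} (h : 0 < specRad B) : Nonempty m := by
  by_contra hm
  have : IsEmpty m := not_nonempty_iff.mp hm
  simp [specRad] at h

lemma spectralRadius_map_ofReal_le (B : Matrix m m ℝ) :
    spectralRadius ℂ (B.map Complex.ofReal) ≤ ENNReal.ofReal (specRad B) :=
  iSup₂_le fun μ hμ => by
    rw [← enorm_eq_nnnorm, ← ofReal_norm]
    exact ENNReal.ofReal_le_ofReal <|
      le_csSup ((spectrum.isCompact _).image continuous_norm).bddAbove ⟨μ, hμ, rfl⟩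

lemma exists_mem_spectrum_norm_eq_specRad [Nonempty m] (B : Matrix m m ℝ) :
    ∃ μ ∈ spectrum ℂ (B.map Complex.ofReal), ‖μ‖ = specRad B :=
  ((spectrum.isCompact _).image continuous_norm).sSup_mem ((spectrum.nonempty _).image _)

lemma map_ofReal_pow (B : Matrix m m ℝ) (k : ℕ) :
    (B ^ k).map Complex.ofReal = B.map Complex.ofReal ^ k :=
  map_pow Complex.ofRealHom.mapMatrix B k

lemma norm_map_ofReal (B : Matrix m m ℝ) : ‖B.map Complex.ofReal‖ = ‖B‖ := by
  simp [linfty_opNorm_def, map_apply]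

lemma le_specRad_of_smul_le_mulVec {B : Matrix m m ℝ} (hB : ∀ i j, 0 ≤ B i j) {r : ℝ}
    {x : m → ℝ} (hx : 0 ≤ x) (hx0 : x ≠ 0) (h : r • x ≤ B *ᵥ x) : r ≤ specRad B := by
  rcases le_or_gt r 0 with hr | hr
  · exact hr.trans (specRad_nonneg B)
  obtain ⟨i, hi⟩ : ∃ i, 0 < x i := by
    by_contra! hneg
    exact hx0 (le_antisymm hneg hx)
  have hxn : 0 < ‖x‖ := norm_pos_iff.mpr hx0
  have hgrowth : ∀ k : ℕ, x i / ‖x‖ * r ^ k ≤ ‖(B.map Complex.ofReal) ^ k‖ := by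
    intro k
    rw [← map_ofReal_pow, norm_map_ofReal, div_mul_eq_mul_div, div_le_iff₀ hxn]
    calc x i * r ^ k = (r ^ k • x) i := mul_comm _ _
      _ ≤ (B ^ k *ᵥ x) i := pow_smul_le_pow_mulVec hB hr.le h k i
      _ ≤ ‖B ^ k *ᵥ x‖ := (le_abs_self _).trans (norm_le_pi_norm (B ^ k *ᵥ x) i)
      _ ≤ ‖B ^ k‖ * ‖x‖ := linfty_opNorm_mulVec _ _
  have := (ofReal_le_spectralRadius_of_mul_pow_le_norm _ (div_pos hi hxn) hr.le hgrowth).trans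
    (spectralRadius_map_ofReal_le B)
  exact (ENNReal.ofReal_le_ofReal_iff (specRad_nonneg B)).mp this

lemma exists_nonneg_specRad_smul_le_mulVec [Nonempty m] {B : Matrix m m ℝ}
    (hB : ∀ i j, 0 ≤ B i j) : ∃ x : m → ℝ, 0 ≤ x ∧ x ≠ 0 ∧ specRad B • x ≤ B *ᵥ x := by
  obtain ⟨μ, hμ, hnorm⟩ := exists_mem_spectrum_norm_eq_specRad B
  rw [← spectrum_toLin', ← Module.End.hasEigenvalue_iff_mem_spectrum] at hμ
  obtain ⟨z, hz⟩ := hμ.exists_hasEigenvector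
  refine ⟨fun i => ‖z i‖, fun i => norm_nonneg _, fun h0 => hz.2 ?_, fun i => ?_⟩
  · ext i
    simpa using congrFun h0 i
  calc specRad B * ‖z i‖ = ‖(B.map Complex.ofReal *ᵥ z) i‖ := by
        rw [← toLin'_apply, hz.apply_eq_smul, Pi.smul_apply, smul_eq_mul, norm_mul, hnorm]
    _ ≤ ∑ j, ‖(B i j : ℂ) * z j‖ := norm_sum_le _ _
    _ = (B *ᵥ fun j => ‖z j‖) i := by
        simp only [norm_mul, Complex.norm_real, Real.norm_of_nonneg (hB _ _)]
        rfl

end SpecRad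

section Companion

variable {m α : Type*} [DecidableEq m] [Field α] [LinearOrder α]
  [IsStrictOrderedRing α] {X Y : Matrix m m α} {r : α}

lemma fromBlocks_one_zero_nonneg (hX : ∀ i j, 0 ≤ X i j) (hY : ∀ i j, 0 ≤ Y i j) :
    ∀ i j, 0 ≤ (fromBlocks X 1 Y 0 : Matrix (m ⊕ m) (m ⊕ m) α) i j := by
  rintro (i | i) (j | j)
  exacts [hX i j, by rw [fromBlocks_apply₁₂, one_apply]; split_ifs <;> simp, hY i j, le_rfl]

lemma exists_sq_smul_le_of_smul_le_fromBlocks_mulVec [Fintype m] (hr : 0 < r) {x : m ⊕ m → α}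
    (hx : 0 ≤ x) (hx0 : x ≠ 0) (h : r • x ≤ fromBlocks X 1 Y 0 *ᵥ x) :
    ∃ u : m → α, 0 ≤ u ∧ u ≠ 0 ∧ r ^ 2 • u ≤ r • (X *ᵥ u) + Y *ᵥ u := by
  set u : m → α := fun i => x (Sum.inl i)
  set w : m → α := fun i => x (Sum.inr i)
  have hx_eq : x = Sum.elim u w := (Sum.elim_comp_inl_inr x).symm
  rw [hx_eq, fromBlocks_mulVec] at h
  have h₁ : r • u ≤ X *ᵥ u + w := fun i => by simpa using h (Sum.inl i)
  have h₂ : r • w ≤ Y *ᵥ u := fun i => by simpa using h (Sum.inr i)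
  refine ⟨u, fun i => hx _, fun hu => hx0 ?_, ?_⟩
  · have hw : w = 0 := le_antisymm (fun i => ?_) (fun i => hx _)
    · rw [hx_eq, hu, hw]
      ext (i | i) <;> rfl
    · have := h₂ i
      simp only [hu, mulVec_zero, Pi.smul_apply, smul_eq_mul, Pi.zero_apply] at this ⊢
      exact nonpos_of_mul_nonpos_right this hr
  · calc r ^ 2 • u = r • (r • u) := by rw [sq, mul_smul]
      _ ≤ r • (X *ᵥ u + w) := smul_le_smul_of_nonneg_left h₁ hr.le
      _ = r • (X *ᵥ u) + r • w := smul_add ..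
      _ ≤ r • (X *ᵥ u) + Y *ᵥ u := by gcongr

lemma exists_smul_le_fromBlocks_mulVec_of_sq_smul_le [Fintype m] (hY : ∀ i j, 0 ≤ Y i j)
    (hr : 0 < r) {u : m → α} (hu : 0 ≤ u) (hu0 : u ≠ 0) (h : r ^ 2 • u ≤ r • (X *ᵥ u) + Y *ᵥ u) :
    ∃ x : m ⊕ m → α, 0 ≤ x ∧ x ≠ 0 ∧ r • x ≤ fromBlocks X 1 Y 0 *ᵥ x := by
  have hYu : 0 ≤ Y *ᵥ u := by simpa using mulVec_mono_of_nonneg hY hu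
  refine ⟨Sum.elim u (r⁻¹ • (Y *ᵥ u)), ?_,
    fun h0 => hu0 (funext fun i => congrFun h0 (.inl i)), ?_⟩
  · rintro (i | i)
    exacts [hu i, mul_nonneg (inv_nonneg.mpr hr.le) (hYu i)]
  simp only [fromBlocks_mulVec, Sum.elim_comp_inl, Sum.elim_comp_inr, one_mulVec, zero_mulVec,
    add_zero]
  rintro (i | i)
  · have := h i
    simp only [Pi.smul_apply, Pi.add_apply, smul_eq_mul] at this
    simp only [Sum.elim_inl, Pi.smul_apply, Pi.add_apply, smul_eq_mul]
    refine (mul_le_mul_iff_right₀ hr).mp ?_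
    rw [mul_add, mul_inv_cancel_left₀ hr.ne']
    linear_combination this
  · simp [hr.ne']

end Companion

section Splitting

variable {m : Type*} [Fintype m]

lemma itMatII_transpose [DecidableEq m] (P R S : Matrix m m ℝ) :
    (itMatII P R S)ᵀ = fromBlocks (R * P⁻¹) 1 (-(S * P⁻¹)) 0 := by
  simp [itMatII, fromBlocks_transpose]

lemma smul_mulVec_sub_eq_of_splitting {A P R S : Matrix m m ℝ} (hsplit : A = P - R + S) (r : ℝ)
    (z : m → ℝ) : r • (R *ᵥ z) - S *ᵥ z - r ^ 2 • (P *ᵥ z) =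
      (r * (1 - r)) • (P *ᵥ z) - (1 - r) • (S *ᵥ z) - r • (A *ᵥ z) := by
  rw [hsplit, add_mulVec, sub_mulVec]
  module

lemma sq_smul_mulVec_le_of_splitting_le {A P₁ R₁ S₁ P₂ R₂ S₂ : Matrix m m ℝ}
    (hsplit₁ : A = P₁ - R₁ + S₁) (hsplit₂ : A = P₂ - R₂ + S₂) {r : ℝ} (hr0 : 0 ≤ r)
    (hr1 : r ≤ 1) {z : m → ℝ} (hP : P₁ *ᵥ z ≤ P₂ *ᵥ z) (hS : S₂ *ᵥ z ≤ S₁ *ᵥ z)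
    (h : r ^ 2 • (P₁ *ᵥ z) ≤ r • (R₁ *ᵥ z) - S₁ *ᵥ z) :
    r ^ 2 • (P₂ *ᵥ z) ≤ r • (R₂ *ᵥ z) - S₂ *ᵥ z := by
  rw [← sub_nonneg, smul_mulVec_sub_eq_of_splitting hsplit₁] at h
  rw [← sub_nonneg, smul_mulVec_sub_eq_of_splitting hsplit₂]
  refine h.trans (sub_le_sub_right (sub_le_sub ?_ ?_) _)
  · exact smul_le_smul_of_nonneg_left hP (mul_nonneg hr0 (sub_nonneg.mpr hr1))
  · exact smul_le_smul_of_nonneg_left hS (sub_nonneg.mpr hr1)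

lemma sq_smul_le_of_splitting_comparison [DecidableEq m] {A P₁ R₁ S₁ P₂ R₂ S₂ : Matrix m m ℝ}
    (hsplit₁ : A = P₁ - R₁ + S₁) (hPinv₁ : IsUnit P₁.det) (hsplit₂ : A = P₂ - R₂ + S₂)
    (hPinv₂ : IsUnit P₂.det) {r : ℝ} (hr0 : 0 ≤ r) (hr1 : r ≤ 1) {u : m → ℝ}
    (hPu : u ≤ (P₂ * P₁⁻¹) *ᵥ u) (hSu : (S₂ * P₁⁻¹) *ᵥ u ≤ (S₁ * P₁⁻¹) *ᵥ u)
    (h : r ^ 2 • u ≤ r • ((R₁ * P₁⁻¹) *ᵥ u) + -(S₁ * P₁⁻¹) *ᵥ u) :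
    r ^ 2 • ((P₂ * P₁⁻¹) *ᵥ u) ≤
      r • ((R₂ * P₂⁻¹) *ᵥ ((P₂ * P₁⁻¹) *ᵥ u)) + -(S₂ * P₂⁻¹) *ᵥ ((P₂ * P₁⁻¹) *ᵥ u) := by
  obtain ⟨z, rfl⟩ : ∃ z, u = P₁ *ᵥ z :=
    ⟨P₁⁻¹ *ᵥ u, by rw [mulVec_mulVec, mul_nonsing_inv _ hPinv₁, one_mulVec]⟩
  have hz₁ : P₁⁻¹ *ᵥ (P₁ *ᵥ z) = z := by rw [mulVec_mulVec, nonsing_inv_mul _ hPinv₁, one_mulVec]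
  have hz₂ : P₂⁻¹ *ᵥ (P₂ *ᵥ z) = z := by rw [mulVec_mulVec, nonsing_inv_mul _ hPinv₂, one_mulVec]
  simp only [← mulVec_mulVec, neg_mulVec, ← sub_eq_add_neg, hz₁, hz₂] at hPu hSu h ⊢
  exact sq_smul_mulVec_le_of_splitting_le hsplit₁ hsplit₂ hr0 hr1 hPu hSu h

end Splitting

theorem stmt11_general {n : ℕ} (A P₁ R₁ S₁ P₂ R₂ S₂ : Matrix (Fin n) (Fin n) ℝ)
    -- two double weak splittings of type II
    (hsplit₁ : A = P₁ - R₁ + S₁) (hPinv₁ : IsUnit P₁.det)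
    (hRP₁ : entryLE 0 (R₁ * P₁⁻¹)) (hSP₁ : entryLE 0 (-(S₁ * P₁⁻¹)))
    (hsplit₂ : A = P₂ - R₂ + S₂) (hPinv₂ : IsUnit P₂.det)
    (hRP₂ : entryLE 0 (R₂ * P₂⁻¹)) (hSP₂ : entryLE 0 (-(S₂ * P₂⁻¹)))
    -- both splittings are convergent
    (hconv₁ : specRad (itMatII P₁ R₁ S₁) < 1)
    (hconv₂ : specRad (itMatII P₂ R₂ S₂) < 1)
    -- `P₂P₁⁻¹ ≥ I` and `S₁P₁⁻¹ ≥ S₂P₁⁻¹`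
    (hP : entryLE 1 (P₂ * P₁⁻¹)) (hS : entryLE (S₂ * P₁⁻¹) (S₁ * P₁⁻¹)) :
    specRad (itMatII P₁ R₁ S₁) ≤ specRad (itMatII P₂ R₂ S₂) ∧
      specRad (itMatII P₂ R₂ S₂) < 1 := by
  refine ⟨?_, hconv₂⟩
  rw [← specRad_transpose, itMatII_transpose] at hconv₁ ⊢
  rw [← specRad_transpose (itMatII P₂ R₂ S₂), itMatII_transpose]
  rcases le_or_gt (specRad (fromBlocks (R₁ * P₁⁻¹) 1 (-(S₁ * P₁⁻¹)) 0)) 0 with hr | hr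
  · exact hr.trans (specRad_nonneg _)
  have := nonempty_of_specRad_pos hr
  obtain ⟨x, hx, hx0, hx_le⟩ :=
    exists_nonneg_specRad_smul_le_mulVec (fromBlocks_one_zero_nonneg hRP₁ hSP₁)
  obtain ⟨u, hu, hu0, hu_le⟩ := exists_sq_smul_le_of_smul_le_fromBlocks_mulVec hr hx hx0 hx_le
  have hPu : u ≤ (P₂ * P₁⁻¹) *ᵥ u := by simpa using mulVec_le_mulVec_of_le hP hu
  obtain ⟨y, hy, hy0, hy_le⟩ := exists_smul_le_fromBlocks_mulVec_of_sq_smul_le hSP₂ hr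
    (hu.trans hPu) (fun h0 => hu0 (le_antisymm (h0 ▸ hPu) hu))
    (sq_smul_le_of_splitting_comparison hsplit₁ hPinv₁ hsplit₂ hPinv₂ hr.le hconv₁.le hPu
      (mulVec_le_mulVec_of_le hS hu) hu_le)
  exact le_specRad_of_smul_le_mulVec (fromBlocks_one_zero_nonneg hRP₂ hSP₂) hy hy0 hy_le

theorem stmt11 {n : ℕ} (A P₁ R₁ S₁ P₂ R₂ S₂ : Matrix (Fin n) (Fin n) ℝ)
    (hAsym : Aᵀ = A) (hAinv : IsUnit A.det)
    -- two double weak splittings of type II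
    (hsplit₁ : A = P₁ - R₁ + S₁) (hPinv₁ : IsUnit P₁.det)
    (hRP₁ : entryLE 0 (R₁ * P₁⁻¹)) (hSP₁ : entryLE 0 (-(S₁ * P₁⁻¹)))
    (hsplit₂ : A = P₂ - R₂ + S₂) (hPinv₂ : IsUnit P₂.det)
    (hRP₂ : entryLE 0 (R₂ * P₂⁻¹)) (hSP₂ : entryLE 0 (-(S₂ * P₂⁻¹)))
    -- both splittings are convergent
    (hconv₁ : specRad (itMatII P₁ R₁ S₁) < 1)
    (hconv₂ : specRad (itMatII P₂ R₂ S₂) < 1)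
    -- `P₂P₁⁻¹ ≥ I` and `S₁P₁⁻¹ ≥ S₂P₁⁻¹`
    (hP : entryLE 1 (P₂ * P₁⁻¹)) (hS : entryLE (S₂ * P₁⁻¹) (S₁ * P₁⁻¹)) :
    specRad (itMatII P₁ R₁ S₁) ≤ specRad (itMatII P₂ R₂ S₂) ∧
      specRad (itMatII P₂ R₂ S₂) < 1 :=
  stmt11_general A P₁ R₁ S₁ P₂ R₂ S₂ hsplit₁ hPinv₁ hRP₁ hSP₁ hsplit₂ hPinv₂ hRP₂ hSP₂ hconv₁ hconv₂
    hP hS
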